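/- arXiv:1212.0205 — 5 statements merged into one kernel-verified Lean document; each statement's English description precedes it below -/
import Mathlib

section
/- Let R be a commutative ring which is a ℚ-algebra, equipped with a derivation ∂, and let F, G, y₁, y₂ ∈ R. Suppose F·∂²yᵢ + (1/2)·∂F·∂yᵢ + (1/4)·G·yᵢ = 0 for i = 1, 2. Then the product u = y₁·y₂ satisfies F·∂³u + (3/2)·∂F·∂²u + ((1/2)·∂²F + G)·∂u + (1/2)·∂G·u = 0. -/
theorem stmt_6 {R : Type*} [CommRing R] [Algebra ℚ R] (d : Derivation ℚ R R)
    (F G y₁ y₂ : R)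
    (h1 : F * d (d y₁) + (1 / 2 : ℚ) • (d F * d y₁) + (1 / 4 : ℚ) • (G * y₁) = 0)
    (h2 : F * d (d y₂) + (1 / 2 : ℚ) • (d F * d y₂) + (1 / 4 : ℚ) • (G * y₂) = 0) :
    F * d (d (d (y₁ * y₂))) + (3 / 2 : ℚ) • (d F * d (d (y₁ * y₂)))
      + ((1 / 2 : ℚ) • d (d F) + G) * d (y₁ * y₂)
      + (1 / 2 : ℚ) • (d G * (y₁ * y₂)) = 0 := by
  set a := algebraMap ℚ R (1/2) with ha
  have h14 : ∀ x : R, (1/4 : ℚ) • x = a * a * x := by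
    intro x
    rw [Algebra.smul_def, ha, ← map_mul]; norm_num
  have h12 : ∀ x : R, (1/2 : ℚ) • x = a * x := by
    intro x; rw [Algebra.smul_def]
  have h32 : ∀ x : R, (3/2 : ℚ) • x = 3 * a * x := by
    intro x
    rw [Algebra.smul_def, ha, ← map_ofNat (algebraMap ℚ R) 3, ← map_mul]
    norm_num
  have h2a : 2 * a = 1 := by
    rw [ha, ← map_ofNat (algebraMap ℚ R) 2, ← map_mul]
    norm_num
  have hda : d a = 0 := by rw [ha]; exact Derivation.map_algebraMap d _
  simp only [h14, h12, h32] at h1 h2 ⊢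
  have dh1 := congrArg d h1
  have dh2 := congrArg d h2
  simp only [map_add, Derivation.leibniz, map_zero, smul_eq_mul, hda,
    mul_zero, zero_mul, add_zero, zero_add] at dh1 dh2 ⊢
  linear_combination 3 * d y₂ * h1 + 3 * d y₁ * h2 + y₂ * dh1 + y₁ * dh2 +
    (d F * d (d y₁) * y₂ + d F * y₁ * d (d y₂)
      - (2*a+1) * G * (d y₁ * y₂ + y₁ * d y₂) - a * d G * y₁ * y₂) * h2a
end

section
/- Let K be a field of characteristic zero, let α₃, α₂, α₁, α₀ ∈ K, set F(z) = z⁴ + α₃z³ + α₂z² + α₁z + α₀, and suppose z₀ ∈ K satisfies F(z₀) = 0. Put α̃₁ = F′(z₀), α̃₂ = F″(z₀)/2, α̃₃ = F‴(z₀)/6. Then α̃₁·α̃₃ − (1/3)·α̃₂² = B(α₃,α₂,α₁,α₀) and α̃₁² + (2/27)·α̃₂³ − (1/3)·α̃₁·α̃₂·α̃₃ = C(α₃,α₂,α₁,α₀). -/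
/-- The coefficient `B` of the spectral elliptic curve `y² = x³ + Bx + C` of the quartic
`z⁴ + α₃z³ + α₂z² + α₁z + α₀`. -/
def specB {K : Type*} [Field K] (α₃ α₂ α₁ α₀ : K) : K :=
  α₁ * α₃ - (1 / 3) * α₂ ^ 2 - 4 * α₀

/-- The coefficient `C` of the spectral elliptic curve `y² = x³ + Bx + C` of the quartic
`z⁴ + α₃z³ + α₂z² + α₁z + α₀`. -/
def specC {K : Type*} [Field K] (α₃ α₂ α₁ α₀ : K) : K :=
  α₀ * α₃ ^ 2 - (1 / 3) * α₁ * α₂ * α₃ + (2 / 27) * α₂ ^ 3 - (8 / 3) * α₀ * α₂ + α₁ ^ 2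

theorem stmt_8 {K : Type*} [Field K] [CharZero K] (α₃ α₂ α₁ α₀ z₀ : K)
    (F : Polynomial K)
    (hF : F = Polynomial.X ^ 4 + Polynomial.C α₃ * Polynomial.X ^ 3
      + Polynomial.C α₂ * Polynomial.X ^ 2 + Polynomial.C α₁ * Polynomial.X + Polynomial.C α₀)
    (hz₀ : F.eval z₀ = 0)
    (a₁ a₂ a₃ : K)
    (ha₁ : a₁ = (Polynomial.derivative F).eval z₀)
    (ha₂ : a₂ = (Polynomial.derivative (Polynomial.derivative F)).eval z₀ / 2)
    (ha₃ : a₃ = (Polynomial.derivative (Polynomial.derivative (Polynomial.derivative F))).eval z₀ / 6) :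
    a₁ * a₃ - (1 / 3) * a₂ ^ 2 = specB α₃ α₂ α₁ α₀ ∧
    a₁ ^ 2 + (2 / 27) * a₂ ^ 3 - (1 / 3) * a₁ * a₂ * a₃ = specC α₃ α₂ α₁ α₀ := by
  subst hF
  simp at hz₀ ha₁ ha₂ ha₃
  have h0 : α₀ = -(z₀ ^ 4 + α₃ * z₀ ^ 3 + α₂ * z₀ ^ 2 + α₁ * z₀) := by linear_combination hz₀
  subst ha₁ ha₂ ha₃ h0
  constructor <;> (simp only [specB, specC]; field_simp; ring)
end

section
/- Let K be a field of characteristic zero, let α₃, α₂, α₁, α₀ ∈ K, set F(z) = z⁴ + α₃z³ + α₂z² + α₁z + α₀, and suppose z₀ ∈ K satisfies F(z₀) = 0. Put α̃₁ = F′(z₀) and α̃₂ = F″(z₀)/2. Then the point P = (α̃₂/3, α̃₁) lies on the spectral elliptic curve, i.e. α̃₁² = (α̃₂/3)³ + B(α₃,α₂,α₁,α₀)·(α̃₂/3) + C(α₃,α₂,α₁,α₀). -/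
/-!
`B` and `C` are invariant under the translation `z ↦ z + z₀`. Translating by a root `z₀`, the
quartic becomes `t⁴ + α̃₃t³ + α̃₂t² + α̃₁t` with `α̃₁ = F′(z₀)`, `α̃₂ = F″(z₀)/2`, and for a quartic
with vanishing constant term the identity `α̃₁² = (α̃₂/3)³ + B·α̃₂/3 + C` is immediate.
-/

open Polynomial

section Spectral

variable {K : Type*} [Field K] [CharZero K]

/-- The arguments on the left are the coefficients of `F(z + t)`. -/
theorem specB_shift (α₃ α₂ α₁ α₀ t : K) :
    specB (α₃ + 4 * t) (α₂ + 3 * α₃ * t + 6 * t ^ 2)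
      (α₁ + 2 * α₂ * t + 3 * α₃ * t ^ 2 + 4 * t ^ 3)
      (α₀ + α₁ * t + α₂ * t ^ 2 + α₃ * t ^ 3 + t ^ 4) = specB α₃ α₂ α₁ α₀ := by
  unfold specB
  ring

theorem specC_shift (α₃ α₂ α₁ α₀ t : K) :
    specC (α₃ + 4 * t) (α₂ + 3 * α₃ * t + 6 * t ^ 2)
      (α₁ + 2 * α₂ * t + 3 * α₃ * t ^ 2 + 4 * t ^ 3)
      (α₀ + α₁ * t + α₂ * t ^ 2 + α₃ * t ^ 3 + t ^ 4) = specC α₃ α₂ α₁ α₀ := by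
  unfold specC
  ring

theorem sq_eq_spec_of_constCoeff_eq_zero (α₃ α₂ α₁ : K) :
    α₁ ^ 2 = (α₂ / 3) ^ 3 + specB α₃ α₂ α₁ 0 * (α₂ / 3) + specC α₃ α₂ α₁ 0 := by
  unfold specB specC
  ring

end Spectral

section Quartic

variable {K : Type*} [CommRing K] (α₃ α₂ α₁ α₀ z : K)

noncomputable def quartic : K[X] :=
  X ^ 4 + C α₃ * X ^ 3 + C α₂ * X ^ 2 + C α₁ * X + C α₀

theorem eval_quartic :
    (quartic α₃ α₂ α₁ α₀).eval z = α₀ + α₁ * z + α₂ * z ^ 2 + α₃ * z ^ 3 + z ^ 4 := by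
  simp only [quartic, eval_add, eval_mul, eval_pow, eval_C, eval_X]
  ring

theorem eval_derivative_quartic :
    (derivative (quartic α₃ α₂ α₁ α₀)).eval z
      = α₁ + 2 * α₂ * z + 3 * α₃ * z ^ 2 + 4 * z ^ 3 := by
  simp only [quartic, derivative_X_pow_succ, Nat.cast_ofNat, map_add, map_one,
    derivative_mul, derivative_C, zero_mul, zero_add, Nat.cast_one, pow_one, derivative_X, mul_one,
    add_zero, eval_add, eval_mul, eval_C, eval_one, eval_pow, eval_X]
  ring

theorem eval_derivative_derivative_quartic :
    (derivative (derivative (quartic α₃ α₂ α₁ α₀))).eval z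
      = 2 * (α₂ + 3 * α₃ * z + 6 * z ^ 2) := by
  simp only [quartic, derivative_X_pow_succ, Nat.cast_ofNat, map_add, map_one,
    derivative_mul, derivative_C, zero_mul, zero_add, Nat.cast_one, pow_one, derivative_X, mul_one,
    add_zero, derivative_one, eval_add, eval_mul, eval_C, eval_one, eval_pow, eval_X]
  ring

end Quartic

theorem stmt_10 {K : Type*} [Field K] [CharZero K] (α₃ α₂ α₁ α₀ z₀ : K)
    (F : Polynomial K)
    (hF : F = Polynomial.X ^ 4 + Polynomial.C α₃ * Polynomial.X ^ 3
      + Polynomial.C α₂ * Polynomial.X ^ 2 + Polynomial.C α₁ * Polynomial.X + Polynomial.C α₀)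
    (hz₀ : F.eval z₀ = 0)
    (a₁ a₂ : K)
    (ha₁ : a₁ = (Polynomial.derivative F).eval z₀)
    (ha₂ : a₂ = (Polynomial.derivative (Polynomial.derivative F)).eval z₀ / 2) :
    a₁ ^ 2 = (a₂ / 3) ^ 3 + specB α₃ α₂ α₁ α₀ * (a₂ / 3) + specC α₃ α₂ α₁ α₀ := by
  change F = quartic α₃ α₂ α₁ α₀ at hF
  subst hF ha₁ ha₂
  rw [eval_quartic] at hz₀
  rw [eval_derivative_quartic, eval_derivative_derivative_quartic,
    mul_div_cancel_left₀ _ two_ne_zero, ← specB_shift α₃ α₂ α₁ α₀ z₀,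
    ← specC_shift α₃ α₂ α₁ α₀ z₀, hz₀]
  exact sq_eq_spec_of_constCoeff_eq_zero _ _ _
end

section
/- Let α₂, α₁, β ∈ ℚ and let (uₙ)_{n≥0} be a sequence of rationals satisfying (n+1)²·u_{n+1} + (α₂n² + α₂n − β)·uₙ + α₁n²·u_{n−1} = 0 for all n ≥ 0 (with the convention u_{−1} = 0). Then the sequence uₙ′ = C(2n, n)·uₙ, where C(2n, n) is the central binomial coefficient, satisfies (n+1)³·u′_{n+1} + 2(2n+1)(α₂n² + α₂n − β)·u′ₙ + 4α₁(2n+1)(2n−1)n·u′_{n−1} = 0 for all n ≥ 0. -/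
lemma key_cb (m : ℕ) : ((m : ℚ) + 1) * (Nat.choose (2 * (m + 1)) (m + 1) : ℚ)
    = 2 * (2 * (m : ℚ) + 1) * (Nat.choose (2 * m) m : ℚ) := by
  have h := Nat.succ_mul_centralBinom_succ m
  simp only [Nat.centralBinom] at h
  exact_mod_cast h

theorem stmt_13 (α₂ α₁ β : ℚ) (u : ℕ → ℚ)
    (hrec : ∀ n : ℕ, ((n : ℚ) + 1) ^ 2 * u (n + 1) + (α₂ * n ^ 2 + α₂ * n - β) * u n
      + α₁ * n ^ 2 * (if 1 ≤ n then u (n - 1) else 0) = 0)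
    (u' : ℕ → ℚ) (hu' : ∀ n : ℕ, u' n = (Nat.choose (2 * n) n : ℚ) * u n) :
    ∀ n : ℕ, ((n : ℚ) + 1) ^ 3 * u' (n + 1)
      + 2 * (2 * (n : ℚ) + 1) * (α₂ * n ^ 2 + α₂ * n - β) * u' n
      + 4 * α₁ * (2 * (n : ℚ) + 1) * (2 * (n : ℚ) - 1) * n
        * (if 1 ≤ n then u' (n - 1) else 0) = 0 := by
  intro n
  by_cases hn : 1 ≤ n
  · obtain ⟨m, rfl⟩ : ∃ m, n = m + 1 := ⟨n - 1, (Nat.succ_pred_eq_of_pos hn).symm⟩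
    have h := hrec (m + 1)
    rw [if_pos (by omega : 1 ≤ m + 1)] at h
    simp only [if_pos (by omega : 1 ≤ m + 1), Nat.add_sub_cancel] at h ⊢
    rw [hu', hu', hu']
    have h1 := key_cb (m + 1)
    have h2 := key_cb m
    push_cast at h h1 h2 ⊢
    linear_combination 2 * (2 * ((m : ℚ) + 1) + 1) * (Nat.choose (2 * (m + 1)) (m + 1) : ℚ) * h
      + ((m : ℚ) + 2) ^ 2 * u (m + 2) * h1
      - 2 * (2 * ((m : ℚ) + 1) + 1) * α₁ * ((m : ℚ) + 1) * u m * h2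
  · interval_cases n
    have h := hrec 0
    simp only [if_neg hn] at h ⊢
    rw [hu', hu']
    have h1 := key_cb 0
    push_cast at h h1 ⊢
    linear_combination 2 * (Nat.choose 0 0 : ℚ) * h + u 1 * h1
end

section
/- Let N be a positive integer and let a, c : {1, 2, 3, …} → ℤ be sequences with a(1) = c(1) = 1 satisfying: (i) a(mn) = a(m)·a(n) for all coprime m, n ≥ 1; (ii) a(p^{k+1}) = a(p)·a(p^k) − p·a(p^{k−1}) for every prime p and every k ≥ 1; (iii) for every prime p > N and every n ≥ 1, the integer c(np) − a(p)·c(n) + p·c(n/p) is divisible by p^{ord_p(n)+1}, where c(n/p) is taken to be 0 when p does not divide n and ord_p(n) is the p-adic valuation of n; (iv) 2|c(n)| < n and 2|a(n)| < n for every n > N. Then c(n) = a(n) for every n ≥ 1 all of whose prime factors are greater than N. -/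
theorem stmt_15 (N : ℕ) (hN : 0 < N) (a c : ℕ → ℤ)
    (ha1 : a 1 = 1) (hc1 : c 1 = 1)
    (hmult : ∀ m n : ℕ, 1 ≤ m → 1 ≤ n → Nat.Coprime m n → a (m * n) = a m * a n)
    (hhecke : ∀ (p k : ℕ), p.Prime → 1 ≤ k →
      a (p ^ (k + 1)) = a p * a (p ^ k) - (p : ℤ) * a (p ^ (k - 1)))
    (hASD : ∀ (p n : ℕ), p.Prime → N < p → 1 ≤ n →
      ((p : ℤ) ^ (n.factorization p + 1)) ∣
        (c (n * p) - a p * c n + (p : ℤ) * (if p ∣ n then c (n / p) else 0)))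
    (hbound : ∀ n : ℕ, N < n → 2 * |c n| < (n : ℤ) ∧ 2 * |a n| < (n : ℤ)) :
    ∀ n : ℕ, 1 ≤ n → (∀ p : ℕ, p.Prime → p ∣ n → N < p) → c n = a n := by
  -- a satisfies the full Hecke recursion
  have heckeA : ∀ p m : ℕ, p.Prime → 1 ≤ m →
      a (m * p) = a p * a m - (p : ℤ) * (if p ∣ m then a (m / p) else 0) := by
    intro p m hp hm
    by_cases hpm : p ∣ m
    · rw [if_pos hpm]
      set k := m.factorization p with hk
      have hk1 : 1 ≤ k := hp.factorization_pos_of_dvd (by omega) hpm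
      set m' := m / p ^ k with hm'def
      have hmm : p ^ k * m' = m := Nat.ordProj_mul_ordCompl_eq_self m p
      have hcop : Nat.Coprime p m' := Nat.coprime_ordCompl hp (by omega)
      have hm'pos : 1 ≤ m' := Nat.ordCompl_pos p (by omega)
      have hppos : 1 ≤ p := hp.pos
      have h1 : a (m * p) = a (p ^ (k+1)) * a m' := by
        rw [← hmm]
        have he : p ^ k * m' * p = p ^ (k+1) * m' := by ring
        rw [he, hmult _ _ (Nat.one_le_pow _ _ hppos) hm'pos (Nat.Coprime.pow_left _ hcop)]
      have h2 : a m = a (p ^ k) * a m' := by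
        rw [← hmm, hmult _ _ (Nat.one_le_pow _ _ hppos) hm'pos (Nat.Coprime.pow_left _ hcop)]
      have h3 : m / p = p ^ (k-1) * m' := by
        rw [← hmm]
        have he : p ^ k = p * p ^ (k-1) := by
          conv_lhs => rw [show k = 1 + (k-1) by omega]
          rw [pow_add, pow_one]
        rw [he, mul_assoc, Nat.mul_div_cancel_left _ hp.pos]
      have h4 : a (m / p) = a (p ^ (k-1)) * a m' := by
        rw [h3, hmult _ _ (Nat.one_le_pow _ _ hppos) hm'pos (Nat.Coprime.pow_left _ hcop)]
      rw [h1, hhecke p k hp hk1, h2, h4]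
      ring
    · rw [if_neg hpm, mul_zero, sub_zero]
      have hcop : Nat.Coprime m p := (hp.coprime_iff_not_dvd.mpr hpm).symm
      rw [hmult m p hm hp.pos hcop]
      ring
  intro n
  induction n using Nat.strong_induction_on with
  | _ n ih =>
    intro hn hfac
    rcases eq_or_lt_of_le hn with h1 | h1
    · rw [← h1, hc1, ha1]
    · -- n ≥ 2
      obtain ⟨p0, hp0, hp0n⟩ := Nat.exists_prime_and_dvd (by omega : n ≠ 1)
      have hnN : N < n := lt_of_lt_of_le (hfac p0 hp0 hp0n) (Nat.le_of_dvd (by omega) hp0n)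
      have hdvd : ∀ q ∈ n.primeFactors, ((q:ℤ) ^ (n.factorization q)) ∣ (c n - a n) := by
        intro q hq
        have hq' : q.Prime := Nat.prime_of_mem_primeFactors hq
        have hqn : q ∣ n := Nat.dvd_of_mem_primeFactors hq
        obtain ⟨m, hm⟩ := hqn
        have hmq : n = m * q := by rw [hm]; ring
        have hmpos : 1 ≤ m := Nat.pos_of_ne_zero fun h => by
          subst h; simp at hmq; omega
        have hmlt : m < n := by
          have := hq'.two_le
          calc m = m * 1 := (mul_one m).symm
          _ < m * q := by nlinarith
          _ = n := hmq.symm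
        have hmfac : ∀ r : ℕ, r.Prime → r ∣ m → N < r := fun r hr hrm =>
          hfac r hr (hrm.trans ⟨q, hmq⟩)
        have hcm : c m = a m := ih m hmlt hmpos hmfac
        have hNq : N < q := hfac q hq' (Nat.dvd_of_mem_primeFactors hq)
        have hASD' := hASD q m hq' hNq hmpos
        have hfq : n.factorization q = m.factorization q + 1 := by
          rw [hmq, Nat.factorization_mul (by omega) hq'.ne_zero, Finsupp.add_apply,
            hq'.factorization, Finsupp.single_eq_same]
        have hite : (if q ∣ m then c (m/q) else 0) = (if q ∣ m then a (m/q) else 0) := by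
          by_cases hqm : q ∣ m
          · rw [if_pos hqm, if_pos hqm]
            have hmq1 : 1 ≤ m / q := Nat.one_le_div_iff hq'.pos |>.mpr (Nat.le_of_dvd hmpos hqm)
            have hlt : m / q < n := lt_of_le_of_lt (Nat.div_le_self m q) hmlt
            exact ih (m/q) hlt hmq1 (fun r hr hrm =>
              hmfac r hr (hrm.trans (Nat.div_dvd_of_dvd hqm)))
          · rw [if_neg hqm, if_neg hqm]
        have hzero : a (m * q) - a q * a m + (q:ℤ) * (if q ∣ m then a (m/q) else 0) = 0 := by
          rw [heckeA q m hq' hmpos]; ring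
        have key : c n - a n =
            c (m * q) - a q * c m + (q:ℤ) * (if q ∣ m then c (m/q) else 0) := by
          rw [hcm, hite, hmq]
          linarith [hzero]
        rw [key, hfq]
        exact hASD'
      have hndvd : (n:ℤ) ∣ c n - a n := by
        have hnat : (∏ q ∈ n.primeFactors, q ^ (n.factorization q)) = n := by
          conv_rhs => rw [← Nat.factorization_prod_pow_eq_self (show n ≠ 0 by omega)]
          rfl
        have hprod : (∏ q ∈ n.primeFactors, (q:ℤ) ^ (n.factorization q)) = (n:ℤ) := by
          exact_mod_cast congrArg (Nat.cast : ℕ → ℤ) hnat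
        rw [← hprod]
        apply Finset.prod_dvd_of_coprime
        · intro q hq r hr hqr
          have hq' : Nat.Prime q := Nat.prime_of_mem_primeFactors hq
          have hr' : Nat.Prime r := Nat.prime_of_mem_primeFactors hr
          exact (IsCoprime.pow (Nat.isCoprime_iff_coprime.mpr
            ((Nat.coprime_primes hq' hr').mpr hqr)))
        · exact hdvd
      have hb := hbound n hnN
      have habs : |c n - a n| < (n:ℤ) := by
        have h1 := abs_sub (c n) (a n)
        have h2 := hb.1
        have h3 := hb.2
        calc |c n - a n| ≤ |c n| + |a n| := abs_sub _ _
        _ < (n:ℤ) := by linarith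
      have := Int.eq_zero_of_abs_lt_dvd hndvd habs
      omega
end
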